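/- arXiv:1709.10422 — 2 statements merged into one kernel-verified Lean document; each statement's English description precedes it below -/
import Mathlib

section
/- Let L and N be normal subgroups of a group G and n a natural number. Then [L^n, N] ≤ [L,N]^n [L,N,L], where L^n is the subgroup generated by n-th powers of L. -/
/-- The subgroup generated by `n`-th powers of elements of `H`. -/
def subPow {G : Type*} [Group G] (H : Subgroup G) (n : ℕ) : Subgroup G :=
  Subgroup.closure ((· ^ n) '' (H : Set G))

/-!
Modulo the normal subgroup `K = [L,N]^n [L,N,L]`, every commutator `[l, h]` with `l ∈ L`, `h ∈ N`
commutes with `l` and has order dividing `n`. Once `[l, h]` commutes with `l`, the commutator is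
multiplicative in the first variable, `[l^n, h] = [l, h]^n`, so `l^n` centralizes `N` modulo `K`,
and therefore so does the subgroup `L^n` they generate.
-/

open scoped commutatorElement

open Subgroup

theorem commutatorElement_pow_left_of_commute {G : Type*} [Group G] {a b : G}
    (h : Commute ⁅a, b⁆ a) (n : ℕ) : ⁅a ^ n, b⁆ = ⁅a, b⁆ ^ n := by
  induction n with
  | zero => simp
  | succ n ih =>
    have hsucc : ⁅a ^ (n + 1), b⁆ = a * ⁅a ^ n, b⁆ * a⁻¹ * ⁅a, b⁆ := by
      simp only [commutatorElement_def, pow_succ']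
      group
    rw [hsucc, ih, (h.symm.pow_right n).eq, mul_inv_cancel_right, ← pow_succ]

section subPow

variable {G G' : Type*} [Group G] [Group G'] (H : Subgroup G) (n : ℕ)

theorem subPow_le_iff {K : Subgroup G} : subPow H n ≤ K ↔ ∀ h ∈ H, h ^ n ∈ K := by
  rw [subPow, closure_le, Set.image_subset_iff]
  rfl

theorem map_subPow (f : G →* G') : (subPow H n).map f = subPow (H.map f) n := by
  simp only [subPow, MonoidHom.map_closure, coe_map, Set.image_image, map_pow]

theorem pow_mem_subPow {h : G} (hh : h ∈ H) : h ^ n ∈ subPow H n :=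
  subset_closure ⟨h, hh, rfl⟩

instance subPow_normal [H.Normal] : (subPow H n).Normal :=
  normal_iff_map_conj_eq.mpr fun g => by rw [map_subPow, Normal.map_conj_eq]

theorem commutator_subPow_eq_bot {L N : Subgroup G} (hLNL : ⁅⁅L, N⁆, L⁆ = ⊥)
    (hLN : subPow ⁅L, N⁆ n = ⊥) : ⁅subPow L n, N⁆ = ⊥ := by
  rw [commutator_eq_bot_iff_le_centralizer, subPow_le_iff]
  intro l hl h hh
  have hcomm : Commute ⁅l, h⁆ l := commutatorElement_eq_one_iff_commute.mp <|
    (eq_bot_iff_forall _).mp hLNL _ (commutator_mem_commutator (commutator_mem_commutator hl hh) hl)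
  have hpow : ⁅l, h⁆ ^ n = 1 :=
    (eq_bot_iff_forall _).mp hLN _ (pow_mem_subPow _ _ (commutator_mem_commutator hl hh))
  rw [← commutatorElement_pow_left_of_commute hcomm, commutatorElement_eq_one_iff_mul_comm] at hpow
  exact hpow.symm

end subPow

/-- For normal subgroups `L, N` of `G` and `n : ℕ`, one has
`[L^n, N] ≤ [L,N]^n [L,N,L]`. -/
theorem commutator_pow_le
    {G : Type*} [Group G] (L N : Subgroup G) [L.Normal] [N.Normal] (n : ℕ) :
    ⁅subPow L n, N⁆ ≤ subPow ⁅L, N⁆ n ⊔ ⁅⁅L, N⁆, L⁆ := by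
  set K := subPow ⁅L, N⁆ n ⊔ ⁅⁅L, N⁆, L⁆
  have hker : (QuotientGroup.mk' K).ker = K := QuotientGroup.ker_mk' K
  rw [← hker, ← Subgroup.map_eq_bot_iff, map_commutator, map_subPow]
  apply commutator_subPow_eq_bot
  · rw [← map_commutator, ← map_commutator, Subgroup.map_eq_bot_iff, hker]
    exact le_sup_right
  · rw [← map_commutator, ← map_subPow, Subgroup.map_eq_bot_iff, hker]
    exact le_sup_left
end

section
/- Let G be a finite p-group with G' powerful, and C = C_G(G'/(G')^p). Then [G, C^{p^j}] ≤ (G')^{p^j} for every j ≥ 0. -/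
/-- A subgroup `H` of a (finite) `p`-group is powerful if `H' ≤ H^p` for `p` odd,
or `H' ≤ H^4` for `p = 2`. -/
def IsPowerfulSubgroup (p : ℕ) {G : Type*} [Group G] (H : Subgroup G) : Prop :=
  if p = 2 then ⁅H, H⁆ ≤ subPow H 4 else ⁅H, H⁆ ≤ subPow H p

open scoped commutatorElement

open Subgroup

theorem Subgroup.commute_of_mem_center {G : Type*} [Group G] {z : G} (hz : z ∈ center G)
    (g : G) : Commute z g :=
  (mem_center_iff.mp hz g).symm

section SubPow

variable {G G' : Type*} [Group G] [Group G'] {H K : Subgroup G} {m n : ℕ}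

theorem mem_subPow {x : G} (hx : x ∈ H) (n : ℕ) : x ^ n ∈ subPow H n :=
  subset_closure ⟨x, hx, rfl⟩

theorem subPow_le (h : ∀ x ∈ H, x ^ n ∈ K) : subPow H n ≤ K :=
  (closure_le _).mpr <| by
    rintro _ ⟨x, hx, rfl⟩
    exact h x hx

theorem subPow_le_self (H : Subgroup G) (n : ℕ) : subPow H n ≤ H :=
  subPow_le fun _ hx => pow_mem hx n

theorem subPow_mono (h : H ≤ K) (n : ℕ) : subPow H n ≤ subPow K n :=
  subPow_le fun _ hx => mem_subPow (h hx) n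

theorem subPow_one (H : Subgroup G) : subPow H 1 = H := by
  simp [subPow]

theorem subPow_mul_le (H : Subgroup G) (m n : ℕ) : subPow H (m * n) ≤ subPow (subPow H m) n :=
  subPow_le fun x hx => pow_mul x m n ▸ mem_subPow (mem_subPow hx m) n

theorem subPow_subPow_of_subset_image (n : ℕ) (h : (subPow H m : Set G) ⊆ (· ^ m) '' H) :
    subPow (subPow H m) n = subPow H (m * n) := by
  refine le_antisymm (subPow_le fun y hy => ?_) (subPow_mul_le H m n)
  obtain ⟨x, hx, rfl⟩ := h hy
  rw [← pow_mul]
  exact mem_subPow hx _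

theorem subPow_map (f : G →* G') (H : Subgroup G) (n : ℕ) :
    (subPow H n).map f = subPow (H.map f) n := by
  simp only [subPow, MonoidHom.map_closure, coe_map, Set.image_image, map_pow]

instance subPow.normal [H.Normal] (n : ℕ) : (subPow H n).Normal :=
  normal_iff_map_conj_eq.mpr fun g => by rw [subPow_map, Normal.map_conj_eq H g]

theorem Subgroup.map_subtype_top (H : Subgroup G) : (⊤ : Subgroup H).map H.subtype = H := by
  rw [← MonoidHom.range_eq_map, range_subtype]

theorem pow_eq_one_of_mem_subPow (hc : subPow H m ≤ center G) (h : ∀ u ∈ H, (u ^ m) ^ n = 1)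
    {a : G} (ha : a ∈ subPow H m) : a ^ n = 1 := by
  induction ha using closure_induction with
  | mem _ hx =>
    obtain ⟨u, hu, rfl⟩ := hx
    exact h u hu
  | one => exact one_pow n
  | mul a b ha _ iha ihb =>
    rw [(commute_of_mem_center (hc ha) b).mul_pow, iha, ihb, one_mul]
  | inv a _ iha => rw [inv_pow, iha, inv_one]

theorem exists_pow_eq_of_powers_mul_closed (h : ∀ s t : G, ∃ r, r ^ n = s ^ n * t ^ n) {y : G}
    (hy : y ∈ subPow ⊤ n) : ∃ x, x ^ n = y := by
  induction hy using closure_induction with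
  | mem _ hx =>
    obtain ⟨x, -, rfl⟩ := hx
    exact ⟨x, rfl⟩
  | one => exact ⟨1, one_pow n⟩
  | mul _ _ _ _ ha hb =>
    obtain ⟨s, rfl⟩ := ha
    obtain ⟨t, rfl⟩ := hb
    exact h s t
  | inv _ _ ha =>
    obtain ⟨s, rfl⟩ := ha
    exact ⟨s⁻¹, inv_pow s n⟩

theorem exists_pow_eq_of_mem_subPow_of_subtype
    (h : ∀ y ∈ subPow (⊤ : Subgroup H) n, ∃ x : H, x ^ n = y) {y : G}
    (hy : y ∈ subPow H n) : ∃ x ∈ H, x ^ n = y := by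
  rw [← map_subtype_top H, ← subPow_map] at hy
  obtain ⟨y, hy, rfl⟩ := hy
  obtain ⟨x, rfl⟩ := h y hy
  exact ⟨x, x.2, rfl⟩

end SubPow

section Commutator

variable {G : Type*} [Group G] {x y g : G}

theorem commutatorElement_pow_left_of_mem_center (hc : ⁅x, ⁅x, g⁆⁆ ∈ center G) (n : ℕ) :
    ⁅x ^ n, g⁆ = ⁅x, ⁅x, g⁆⁆ ^ n.choose 2 * ⁅x, g⁆ ^ n := by
  set A := ⁅x, g⁆ with hA
  set c := ⁅x, A⁆
  have hconj : MulAut.conj x c = c := by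
    rw [MulAut.conj_apply, mem_center_iff.mp hc x, mul_inv_cancel_right]
  induction n with
  | zero => simp
  | succ n ih =>
    rw [pow_succ', commutatorElement_mul_left_eq_conj_mul, ← hA, ih, ← MulAut.conj_apply,
      map_mul, map_pow, map_pow, hconj, conj_eq_commutatorElement_mul,
      (commute_of_mem_center hc _).mul_pow, Nat.choose_succ_succ', Nat.choose_one_right]
    group

theorem commutatorElement_pow_left_of_commute_s11 (h : Commute x ⁅x, g⁆) (n : ℕ) :
    ⁅x ^ n, g⁆ = ⁅x, g⁆ ^ n := by
  have hc : ⁅x, ⁅x, g⁆⁆ ∈ center G := by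
    rw [commutatorElement_eq_one_iff_commute.mpr h]
    exact one_mem _
  rw [commutatorElement_pow_left_of_mem_center hc, commutatorElement_eq_one_iff_commute.mpr h,
    one_pow, one_mul]

theorem mul_pow_of_commutatorElement_mem_center (hc : ⁅y, x⁆ ∈ center G) (n : ℕ) :
    (x * y) ^ n = x ^ n * y ^ n * ⁅y, x⁆ ^ n.choose 2 := by
  set c := ⁅y, x⁆
  have hcomm : ∀ (k : ℕ) (z : G), Commute (c ^ k) z := fun k z =>
    (commute_of_mem_center hc z).pow_left k
  have hyx : ∀ k : ℕ, y ^ k * x = c ^ k * x * y ^ k := fun k => by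
    rw [← commutatorElement_pow_left_of_commute_s11 (commute_of_mem_center hc y).symm k,
      commutatorElement_def]
    group
  induction n with
  | zero => simp
  | succ n ih =>
    calc (x * y) ^ (n + 1) = x ^ n * (y ^ n * x) * y * c ^ n.choose 2 := by
          rw [pow_succ, ih, mul_assoc _ (c ^ _), (hcomm _ (x * y)).eq]
          group
      _ = x ^ n * c ^ n * x * y ^ n * y * c ^ n.choose 2 := by
          rw [hyx]
          group
      _ = c ^ n * (x ^ (n + 1) * y ^ (n + 1)) * c ^ n.choose 2 := by
          rw [← (hcomm n (x ^ n)).eq]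
          group
      _ = x ^ (n + 1) * y ^ (n + 1) * c ^ (n + 1).choose 2 := by
          rw [(hcomm n _).eq, Nat.choose_succ_succ', Nat.choose_one_right, pow_add]
          group

theorem commutatorElement_pow_left_mem {N : Subgroup G} [N.Normal] {n : ℕ}
    (h₁ : ⁅x, ⁅x, g⁆⁆ ∈ N) (h₂ : ⁅x, g⁆ ^ n ∈ N) : ⁅x ^ n, g⁆ ∈ N := by
  rw [← QuotientGroup.ker_mk' N, MonoidHom.mem_ker] at *
  simp only [map_commutatorElement, map_pow] at *
  rwa [commutatorElement_pow_left_of_commute_s11 (commutatorElement_eq_one_iff_commute.mp h₁)]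

theorem QuotientGroup.map_mk'_le_center {V P : Subgroup G} [V.Normal] (h : ⁅P, ⊤⁆ ≤ V) :
    P.map (QuotientGroup.mk' V) ≤ center (G ⧸ V) := by
  rw [map_le_iff_le_comap, ← Subgroup.upperCentralSeriesStep_eq_comap_center]
  exact fun a ha g => h (commutator_mem_commutator ha (mem_top g))

theorem Subgroup.commutator_zpowers_sup_le {V P : Subgroup G} [V.Normal] (h : ⁅P, ⊤⁆ ≤ V)
    (x : G) : ⁅zpowers x ⊔ P, zpowers x ⊔ P⁆ ≤ V := by
  have hP := QuotientGroup.map_mk'_le_center h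
  rw [← QuotientGroup.ker_mk' V, ← Subgroup.map_eq_bot_iff, map_commutator,
    commutator_eq_bot_iff_le_centralizer, Subgroup.map_sup, MonoidHom.map_zpowers]
  refine sup_le (le_centralizer_iff.mp (sup_le (zpowers _).le_centralizer ?_)) ?_ <;>
    exact hP.trans (center_le_centralizer _)

theorem Subgroup.eq_bot_of_le_commutator_top [Group.IsNilpotent G] {X : Subgroup G}
    (h : X ≤ ⁅X, ⊤⁆) : X = ⊥ := by
  obtain ⟨n, hn⟩ := Subgroup.nilpotent_iff_lowerCentralSeries.mp ‹_›
  have hle : ∀ m, X ≤ (⊤ : Subgroup G).lowerCentralSeries m := fun m => by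
    induction m with
    | zero => exact le_top
    | succ m ih => exact h.trans (commutator_mono ih le_rfl)
  exact le_bot_iff.mp (hn ▸ hle n)

end Commutator

theorem Nat.Prime.dvd_choose_two {p : ℕ} (hp : p.Prime) (hp2 : p ≠ 2) : p ∣ p.choose 2 :=
  hp.dvd_choose_self two_ne_zero (hp.two_le.lt_of_ne' hp2)

section Card

variable {G : Type*} [Group G] [Finite G]

theorem Subgroup.card_lt_of_ne_top {H : Subgroup G} (h : H ≠ ⊤) : Nat.card H < Nat.card G := by
  rw [← H.card_mul_index]
  exact lt_mul_of_one_lt_right Nat.card_pos (one_lt_index_of_ne_top h)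

theorem Subgroup.card_quotient_lt {V : Subgroup G} [V.Normal] (h : V ≠ ⊥) :
    Nat.card (G ⧸ V) < Nat.card G := by
  rw [card_eq_card_quotient_mul_card_subgroup V]
  exact lt_mul_of_one_lt_right Nat.card_pos ((one_lt_card_iff_ne_bot V).mpr h)

end Card

section PGroup

variable {G : Type*} [Group G] [Finite G] {p : ℕ} [hp : Fact p.Prime]

theorem IsPGroup.index_eq_of_isCoatom (hG : IsPGroup p G) {M : Subgroup G} (hM : IsCoatom M) :
    M.index = p := by
  obtain ⟨m, hm⟩ := IsPGroup.iff_card.mp (hG.to_subgroup M)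
  obtain ⟨n, hn⟩ := IsPGroup.iff_card.mp hG
  have hmn : m < n := (Nat.pow_lt_pow_iff_right hp.out.one_lt).mp
    (hm ▸ hn ▸ card_lt_of_ne_top hM.1)
  obtain ⟨K, hK, hMK⟩ := Sylow.exists_subgroup_card_pow_succ (hn ▸ pow_dvd_pow p hmn) hm
  have hKtop : K = ⊤ := hM.2 K <| hMK.lt_of_ne <| by
    rintro rfl
    have := Nat.pow_right_injective hp.out.two_le (hm.symm.trans hK)
    omega
  have := M.card_mul_index
  rw [← card_top (G := G), ← hKtop, hK, hm, pow_succ] at this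
  exact Nat.eq_of_mul_eq_mul_left (pow_pos hp.out.pos m) this

theorem IsPGroup.subPow_top_le_frattini (hG : IsPGroup p G) :
    subPow (⊤ : Subgroup G) p ≤ frattini G :=
  le_iInf₂ fun M hM => subPow_le fun x _ => by
    have := hG.isNilpotent
    have : M.Normal :=
      NormalizerCondition.normal_of_coatom M Group.normalizerCondition_of_isNilpotent hM
    simpa [hG.index_eq_of_isCoatom hM] using M.pow_index_mem x

theorem IsPGroup.eq_top_of_sup_subPow_eq_top (hG : IsPGroup p G) {H : Subgroup G}
    (h : H ⊔ subPow ⊤ p = ⊤) : H = ⊤ :=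
  frattini_nongenerating <| top_le_iff.mp <|
    h.symm.le.trans (sup_le_sup_left hG.subPow_top_le_frattini H)

theorem IsPGroup.eq_bot_of_le_subPow (hG : IsPGroup p G) {X : Subgroup G} (h : X ≤ subPow X p) :
    X = ⊥ := by
  have htop : subPow (⊤ : Subgroup X) p = ⊤ := map_injective X.subtype_injective <| by
    rw [subPow_map, map_subtype_top]
    exact (subPow_le_self X p).antisymm h
  have hbot := (hG.to_subgroup X).eq_top_of_sup_subPow_eq_top (H := ⊥)
    (by rw [htop, sup_top_eq])
  rw [← map_subtype_top X, ← hbot, Subgroup.map_bot]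

end PGroup

section PowerfullyEmbedded

variable {G G' : Type*} [Group G] [Group G'] {p : ℕ}

def powerfulExponent (p : ℕ) : ℕ :=
  if p = 2 then 4 else p

def IsPowerfullyEmbedded (p : ℕ) (N K : Subgroup G) : Prop :=
  ⁅N, K⁆ ≤ subPow N (powerfulExponent p)

theorem subPow_powerfulExponent_le (H : Subgroup G) (p : ℕ) :
    subPow H (powerfulExponent p) ≤ subPow H p := by
  unfold powerfulExponent
  split_ifs with hp
  · subst hp
    exact (subPow_mul_le H 2 2).trans (subPow_le_self _ 2)
  · exact le_rfl

theorem isPowerfulSubgroup_iff {H : Subgroup G} :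
    IsPowerfulSubgroup p H ↔ IsPowerfullyEmbedded p H H := by
  unfold IsPowerfulSubgroup IsPowerfullyEmbedded powerfulExponent
  split_ifs <;> rfl

theorem IsPowerfullyEmbedded.mono_right {N K K' : Subgroup G} (h : IsPowerfullyEmbedded p N K)
    (hK : K' ≤ K) : IsPowerfullyEmbedded p N K' :=
  (commutator_mono le_rfl hK).trans h

theorem IsPowerfullyEmbedded.commutator_le {N K : Subgroup G} (h : IsPowerfullyEmbedded p N K) :
    ⁅N, K⁆ ≤ subPow N p :=
  h.trans (subPow_powerfulExponent_le N p)

theorem IsPowerfullyEmbedded.normal {N : Subgroup G} (h : IsPowerfullyEmbedded p N ⊤) :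
    N.Normal :=
  commutator_top_right_le_iff.mp (h.trans (subPow_le_self _ _))

theorem isPowerfullyEmbedded_map_iff_of_injective {f : G →* G'} (hf : Function.Injective f)
    {N K : Subgroup G} :
    IsPowerfullyEmbedded p (N.map f) (K.map f) ↔ IsPowerfullyEmbedded p N K := by
  unfold IsPowerfullyEmbedded
  rw [← map_commutator, ← subPow_map, map_le_map_iff_of_injective hf]

theorem isPowerfullyEmbedded_top_top_iff (H : Subgroup G) :
    IsPowerfullyEmbedded p (⊤ : Subgroup H) ⊤ ↔ IsPowerfullyEmbedded p H H := by
  rw [← isPowerfullyEmbedded_map_iff_of_injective H.subtype_injective, map_subtype_top]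

theorem isPowerfullyEmbedded_map_top_iff {f : G →* G'} (hf : Function.Surjective f)
    {N : Subgroup G} :
    IsPowerfullyEmbedded p (N.map f) ⊤ ↔
      ⁅N, ⊤⁆ ≤ subPow N (powerfulExponent p) ⊔ f.ker := by
  unfold IsPowerfullyEmbedded
  rw [← map_top_of_surjective f hf, ← map_commutator, ← subPow_map, Subgroup.map_le_map_iff]

theorem IsPowerfullyEmbedded.subPow_le_center (hp : p.Prime) {N : Subgroup G}
    (hN : IsPowerfullyEmbedded p N ⊤) (hP : ∀ u ∈ subPow N p, u ^ powerfulExponent p = 1)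
    (hX : ∀ u ∈ subPow N p, ∀ g : G, ⁅g, u⁆ ∈ center G ∧ ⁅g, u⁆ ^ p = 1) :
    subPow N p ≤ center G := by
  have hA : ∀ x ∈ N, ∀ g, ⁅x, g⁆ ∈ subPow N (powerfulExponent p) := fun x hx g =>
    hN (commutator_mem_commutator hx (mem_top g))
  have hAP : ∀ x ∈ N, ∀ g, ⁅x, g⁆ ∈ subPow N p := fun x hx g =>
    subPow_powerfulExponent_le N p (hA x hx g)
  refine subPow_le fun x hx => mem_center_iff.mpr fun g => ?_
  suffices ⁅x ^ p, g⁆ = 1 from (commutatorElement_eq_one_iff_mul_comm.mp this).symm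
  obtain ⟨hc, hcp⟩ := hX _ (hAP x hx g) x
  rw [commutatorElement_pow_left_of_mem_center hc]
  rcases eq_or_ne p 2 with rfl | hp2
  · -- `N^4` is central, which kills `⁅x, ⁅x, g⁆⁆` and forces `⁅x, g⁆ ^ 2 = 1`.
    have hN4 : subPow N 4 ≤ center G := subPow_le fun u hu => mem_center_iff.mpr fun b => by
      obtain ⟨hc', hc'p⟩ := hX _ (hAP u hu b) u
      suffices ⁅u ^ 4, b⁆ = 1 from (commutatorElement_eq_one_iff_mul_comm.mp this).symm
      rw [commutatorElement_pow_left_of_mem_center hc', show Nat.choose 4 2 = 2 * 3 from rfl,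
        pow_mul, hc'p, one_pow, one_mul]
      exact hP _ (hAP u hu b)
    have hA4 : ⁅x, g⁆ ∈ subPow N 4 := hA x hx g
    rw [(commute_of_mem_center (hN4 hA4) x).symm.commutator_eq, one_pow, one_mul]
    refine pow_eq_one_of_mem_subPow hN4 (fun u hu => ?_) hA4
    rw [← pow_mul, show 4 * 2 = 2 * 4 from rfl, pow_mul]
    exact hP _ (mem_subPow hu 2)
  · have hq : powerfulExponent p = p := if_neg hp2
    obtain ⟨k, hk⟩ := hp.dvd_choose_two hp2
    rw [hk, pow_mul, hcp, one_pow, one_mul, ← hq]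
    exact hP _ (hAP x hx g)

theorem IsPowerfullyEmbedded.exists_pow_inv_mul_mem (hp : p.Prime)
    (hpow : IsPowerfullyEmbedded p (⊤ : Subgroup G) ⊤)
    (hP : IsPowerfullyEmbedded p (subPow (⊤ : Subgroup G) p) ⊤) {y : G}
    (hy : y ∈ subPow ⊤ p) :
    ∃ x : G, (x ^ p)⁻¹ * y ∈ subPow (subPow ⊤ p) p := by
  set W := subPow (subPow (⊤ : Subgroup G) p) p
  set f := QuotientGroup.mk' W
  have hf : Function.Surjective f := QuotientGroup.mk'_surjective W
  -- In `G ⧸ W` commutators are central with trivial `p.choose 2`-th power, so the product of two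
  -- `p`-th powers is a `p`-th power.
  have hcomm : ∀ c ∈ subPow (⊤ : Subgroup G) (powerfulExponent p),
      f c ∈ center (G ⧸ W) ∧ f c ^ p.choose 2 = 1 := by
    intro c hc
    refine ⟨QuotientGroup.map_mk'_le_center hP.commutator_le
      (mem_map_of_mem f (subPow_powerfulExponent_le ⊤ p hc)), ?_⟩
    rw [← map_pow, ← MonoidHom.mem_ker, QuotientGroup.ker_mk']
    rcases eq_or_ne p 2 with rfl | hp2
    · simpa using subPow_mul_le ⊤ 2 2 hc
    · obtain ⟨k, hk⟩ := hp.dvd_choose_two hp2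
      rw [powerfulExponent, if_neg hp2] at hc
      rw [hk, pow_mul]
      exact pow_mem (mem_subPow hc p) k
  have hpowers : ∀ s t : G ⧸ W, ∃ r, r ^ p = s ^ p * t ^ p := by
    intro s t
    obtain ⟨a, rfl⟩ := hf s
    obtain ⟨b, rfl⟩ := hf t
    obtain ⟨hc, hc1⟩ := hcomm _ (hpow (commutator_mem_commutator (mem_top b) (mem_top a)))
    rw [map_commutatorElement] at hc hc1
    exact ⟨f a * f b, by rw [mul_pow_of_commutatorElement_mem_center hc, hc1, mul_one]⟩
  have hfy : f y ∈ subPow ⊤ p := by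
    rw [← map_top_of_surjective f hf, ← subPow_map]
    exact mem_map_of_mem f hy
  obtain ⟨s, hs⟩ := exists_pow_eq_of_powers_mul_closed hpowers hfy
  obtain ⟨x, rfl⟩ := hf s
  refine ⟨x, ?_⟩
  rw [← QuotientGroup.ker_mk' W, MonoidHom.mem_ker, map_mul, map_inv, map_pow, hs, inv_mul_cancel]

end PowerfullyEmbedded

section PowerStructure

variable {G : Type*} [Group G] [Finite G] {p : ℕ} [hp : Fact p.Prime]

/- Minimal counterexample: by induction the claim holds modulo every nontrivial normal subgroup,
which leaves the case where `(N^p)^q = 1` and `⁅N^p, G⁆` is central of exponent `p`, settled by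
`IsPowerfullyEmbedded.subPow_le_center`. -/
theorem IsPGroup.isPowerfullyEmbedded_subPow_top (hG : IsPGroup p G) {N : Subgroup G}
    (hN : IsPowerfullyEmbedded p N ⊤) : IsPowerfullyEmbedded p (subPow N p) ⊤ := by
  induction G using Finite.induction_subsingleton_or_nontrivial generalizing ‹Group G› with
  | hbase G =>
    intro x _
    rw [Subsingleton.elim x 1]
    exact one_mem _
  | hstep G ih =>
    have := hN.normal
    have := hG.isNilpotent
    set P := subPow N p
    have key : ∀ V : Subgroup G, V.Normal → V ≠ ⊥ →
        ⁅P, ⊤⁆ ≤ subPow P (powerfulExponent p) ⊔ V := by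
      intro V _ hV
      have hf := QuotientGroup.mk'_surjective V
      have := ih (G ⧸ V) (card_quotient_lt hV) (hG.to_quotient V)
        ((isPowerfullyEmbedded_map_top_iff hf).mpr (le_sup_of_le_left hN))
      rwa [← subPow_map, isPowerfullyEmbedded_map_top_iff hf, QuotientGroup.ker_mk'] at this
    unfold IsPowerfullyEmbedded
    rcases eq_or_ne (subPow P (powerfulExponent p)) ⊥ with hY | hY
    swap
    · simpa using key _ inferInstance hY
    set X := ⁅P, (⊤ : Subgroup G)⁆
    rw [hY, le_bot_iff]
    rcases eq_or_ne ⁅X, (⊤ : Subgroup G)⁆ ⊥ with hXc | hXc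
    swap
    · exact eq_bot_of_le_commutator_top (by simpa [hY] using key _ inferInstance hXc)
    rcases eq_or_ne (subPow X p) ⊥ with hXp | hXp
    swap
    · exact hG.eq_bot_of_le_subPow (by simpa [hY] using key _ inferInstance hXp)
    rw [commutator_top_right_eq_bot_iff_le_center]
    refine hN.subPow_le_center hp.out (fun u hu => ?_) fun u hu g => ?_
    · have : u ^ powerfulExponent p ∈ subPow P (powerfulExponent p) := mem_subPow hu _
      rwa [hY, mem_bot] at this
    have hgu : ⁅g, u⁆ ∈ X :=
      (commutator_comm ⊤ P).le (commutator_mem_commutator (mem_top g) hu)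
    have hgup : ⁅g, u⁆ ^ p ∈ subPow X p := mem_subPow hgu p
    rw [hXp, mem_bot] at hgup
    exact ⟨commutator_top_right_eq_bot_iff_le_center.mp hXc hgu, hgup⟩

theorem IsPGroup.isPowerfullyEmbedded_subPow (hG : IsPGroup p G) {N K : Subgroup G}
    (hNK : N ≤ K) (hN : IsPowerfullyEmbedded p N K) : IsPowerfullyEmbedded p (subPow N p) K := by
  have hmap : (N.subgroupOf K).map K.subtype = N := map_subgroupOf_eq_of_le hNK
  have hK : IsPowerfullyEmbedded p (N.subgroupOf K) ⊤ := by
    rwa [← isPowerfullyEmbedded_map_iff_of_injective K.subtype_injective, hmap, map_subtype_top]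
  have := (hG.to_subgroup K).isPowerfullyEmbedded_subPow_top hK
  rwa [← isPowerfullyEmbedded_map_iff_of_injective K.subtype_injective, subPow_map, hmap,
    map_subtype_top] at this

/- Modulo `(G^p)^p` we get `y ≡ x^p`, so `y` lies in the `p`-th power subgroup of the powerful
subgroup `⟨x⟩G^p`. Either that subgroup is proper (induction), or `G = ⟨x⟩` is cyclic. -/
theorem IsPGroup.exists_pow_eq_of_mem_subPow_top (hG : IsPGroup p G)
    (hpow : IsPowerfullyEmbedded p (⊤ : Subgroup G) ⊤) {y : G} (hy : y ∈ subPow ⊤ p) :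
    ∃ x, x ^ p = y := by
  induction G using Finite.induction_subsingleton_or_nontrivial generalizing ‹Group G› with
  | hbase G => exact ⟨1, Subsingleton.elim _ _⟩
  | hstep G ih =>
    have hP := hG.isPowerfullyEmbedded_subPow_top hpow
    obtain ⟨x, hx⟩ := hpow.exists_pow_inv_mul_mem hp.out hP hy
    set H := zpowers x ⊔ subPow ⊤ p
    have hyH : y ∈ subPow H p := by
      rw [← mul_inv_cancel_left (x ^ p) y]
      exact mul_mem (mem_subPow (mem_sup_left (mem_zpowers x)) p)
        (subPow_mono le_sup_right p hx)
    rcases eq_or_ne H ⊤ with hH | hH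
    · have hx : zpowers x = ⊤ := hG.eq_top_of_sup_subPow_eq_top hH
      refine exists_pow_eq_of_powers_mul_closed (fun s t => ⟨s * t, Commute.mul_pow ?_ p⟩)
        (hH ▸ hyH)
      obtain ⟨m, rfl⟩ := mem_zpowers_iff.mp (hx ▸ mem_top s)
      obtain ⟨k, rfl⟩ := mem_zpowers_iff.mp (hx ▸ mem_top t)
      exact (Commute.refl x).zpow_zpow m k
    · have hHpow : IsPowerfullyEmbedded p H H :=
        (commutator_zpowers_sup_le hP x).trans (subPow_mono le_sup_right _)
      obtain ⟨z, -, hz⟩ := exists_pow_eq_of_mem_subPow_of_subtype (fun _ hy' =>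
        ih H (card_lt_of_ne_top hH) (hG.to_subgroup H)
          ((isPowerfullyEmbedded_top_top_iff H).mpr hHpow) hy') hyH
      exact ⟨z, hz⟩

theorem IsPGroup.exists_pow_eq_of_mem_subPow (hG : IsPGroup p G) {E : Subgroup G}
    (hE : IsPowerfullyEmbedded p E E) {y : G} (hy : y ∈ subPow E p) : ∃ x ∈ E, x ^ p = y :=
  exists_pow_eq_of_mem_subPow_of_subtype (fun _ hy' =>
    (hG.to_subgroup E).exists_pow_eq_of_mem_subPow_top
      ((isPowerfullyEmbedded_top_top_iff E).mpr hE) hy') hy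

end PowerStructure

section PowerSeries

variable {G : Type*} [Group G] [Finite G] {p : ℕ} [Fact p.Prime] {H : Subgroup G}

theorem IsPGroup.isPowerfullyEmbedded_subPow_pow (hG : IsPGroup p G)
    (hH : IsPowerfullyEmbedded p H H) (i : ℕ) :
    IsPowerfullyEmbedded p (subPow H (p ^ i)) H ∧
      (subPow H (p ^ i) : Set G) ⊆ (· ^ p ^ i) '' H := by
  induction i with
  | zero =>
    simp only [pow_zero, subPow_one, pow_one, Set.image_id']
    exact ⟨hH, le_rfl⟩
  | succ i ih =>
    obtain ⟨hpe, himage⟩ := ih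
    have heq : subPow (subPow H (p ^ i)) p = subPow H (p ^ (i + 1)) := by
      rw [pow_succ]
      exact subPow_subPow_of_subset_image p himage
    refine ⟨heq ▸ hG.isPowerfullyEmbedded_subPow (subPow_le_self _ _) hpe, fun y hy => ?_⟩
    rw [← heq] at hy
    obtain ⟨x, hx, rfl⟩ :=
      hG.exists_pow_eq_of_mem_subPow (hpe.mono_right (subPow_le_self _ _)) hy
    obtain ⟨h, hh, rfl⟩ := himage hx
    exact ⟨h, hh, by beta_reduce; rw [pow_succ, pow_mul]⟩

theorem IsPGroup.pow_mem_subPow_pow_succ (hG : IsPGroup p G) (hH : IsPowerfullyEmbedded p H H)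
    {i : ℕ} {y : G} (hy : y ∈ subPow H (p ^ i)) : y ^ p ∈ subPow H (p ^ (i + 1)) := by
  obtain ⟨h, hh, rfl⟩ := (hG.isPowerfullyEmbedded_subPow_pow hH i).2 hy
  rw [← pow_mul, ← pow_succ]
  exact mem_subPow hh _

theorem IsPGroup.commutator_subPow_pow_le (hG : IsPGroup p G) (hH : IsPowerfullyEmbedded p H H)
    (i : ℕ) : ⁅subPow H (p ^ i), H⁆ ≤ subPow H (p ^ (i + 1)) :=
  (hG.isPowerfullyEmbedded_subPow_pow hH i).1.commutator_le.trans
    (subPow_le fun _ hy => hG.pow_mem_subPow_pow_succ hH hy)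

theorem IsPGroup.commutatorElement_mem_subPow_pow_succ (hG : IsPGroup p G) [H.Normal]
    (hH : IsPowerfullyEmbedded p H H) {C : Subgroup G}
    (hC : ∀ c ∈ C, ∀ a ∈ H, ⁅c, a⁆ ∈ subPow H p) {c : G} (hc : c ∈ C) (i : ℕ) :
    ∀ z ∈ subPow H (p ^ i), ⁅z, c⁆ ∈ subPow H (p ^ (i + 1)) := by
  induction i with
  | zero =>
    intro z hz
    rw [pow_zero, subPow_one] at hz
    rw [← commutatorElement_inv, zero_add, pow_one]
    exact inv_mem (hC c hc z hz)
  | succ i ih =>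
    intro z hz
    obtain ⟨h, hh, rfl⟩ := (hG.isPowerfullyEmbedded_subPow_pow hH (i + 1)).2 hz
    have hw : h ^ p ^ i ∈ subPow H (p ^ i) := mem_subPow hh _
    have hwc := ih _ hw
    beta_reduce
    rw [show h ^ p ^ (i + 1) = (h ^ p ^ i) ^ p by rw [pow_succ, pow_mul]]
    refine commutatorElement_pow_left_mem ?_ (hG.pow_mem_subPow_pow_succ hH hwc)
    rw [← commutatorElement_inv]
    exact inv_mem (hG.commutator_subPow_pow_le hH (i + 1)
      (commutator_mem_commutator hwc (subPow_le_self H _ hw)))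

theorem IsPGroup.commutatorElement_pow_mem_subPow_pow (hG : IsPGroup p G)
    (hH : IsPowerfullyEmbedded p (commutator G) (commutator G)) {C : Subgroup G}
    (hC : ∀ c ∈ C, ∀ a ∈ commutator G, ⁅c, a⁆ ∈ subPow (commutator G) p) {c : G}
    (hc : c ∈ C) (g : G) (j : ℕ) : ⁅c ^ p ^ j, g⁆ ∈ subPow (commutator G) (p ^ j) := by
  induction j with
  | zero =>
    rw [pow_zero, pow_one, subPow_one, commutator_def]
    exact commutator_mem_commutator (mem_top c) (mem_top g)
  | succ j ih =>
    rw [show c ^ p ^ (j + 1) = (c ^ p ^ j) ^ p by rw [pow_succ, pow_mul]]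
    refine commutatorElement_pow_left_mem ?_ (hG.pow_mem_subPow_pow_succ hH ih)
    rw [← commutatorElement_inv]
    exact inv_mem (hG.commutatorElement_mem_subPow_pow_succ hH hC (pow_mem hc _) j _ ih)

end PowerSeries

/-- If `G` is a finite `p`-group with `G'` powerful and `C = C_G(G'/(G')^p)`,
then `[G, C^(p^j)] ≤ (G')^(p^j)` for every `j ≥ 0`. -/
theorem commutator_top_centralizer_pow
    {p : ℕ} [Fact p.Prime] {G : Type*} [Group G] [Finite G]
    (hG : IsPGroup p G)
    (hpow : IsPowerfulSubgroup p (commutator G))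
    (C : Subgroup G)
    (hC : ∀ g : G, g ∈ C ↔ ∀ a ∈ commutator G, ⁅g, a⁆ ∈ subPow (commutator G) p)
    (j : ℕ) :
    ⁅(⊤ : Subgroup G), subPow C (p ^ j)⁆ ≤ subPow (commutator G) (p ^ j) := by
  have hC' : ∀ c ∈ C, ∀ a ∈ commutator G, ⁅c, a⁆ ∈ subPow (commutator G) p :=
    fun c hc => (hC c).mp hc
  have hle :
      subPow C (p ^ j) ≤ Subgroup.upperCentralSeriesStep (subPow (commutator G) (p ^ j)) :=
    subPow_le fun c hc g =>
      hG.commutatorElement_pow_mem_subPow_pow (isPowerfulSubgroup_iff.mp hpow) hC' hc g j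
  rw [commutator_comm, commutator_le]
  exact fun x hx g _ => hle hx g
end
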